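/- Let d ≥ 1 and let f : ℝ^d → ℝ be a non-negative bounded Borel function. Then the map β ↦ ∫₀¹ f(β(q_β(t))) dt (the line integral of f with respect to the arc-length probability measure of β) is Borel measurable on the Borel subset {β ∈ C([0,1],ℝ^d) : 0 < L(β) < ∞} of C([0,1],ℝ^d) with the supremum-norm topology. (Part 3 of Lemma S2.3 of the paper; this shows that the averaged measure Q_P is well-defined.) -/
import Mathlib


open MeasureTheory Set Filter
open scoped ENNReal unitInterval

noncomputable section

abbrev Euc (d : ℕ) := EuclideanSpace ℝ (Fin d)

/-- The length (total variation on `[0,1]`) of a continuous path. -/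
def curveLength {d : ℕ} (β : C(unitInterval, Euc d)) : ℝ≥0∞ :=
  eVariationOn β Set.univ

/-- The length of `β` restricted to `[0,t]`. -/
def lengthTo {d : ℕ} (β : C(unitInterval, Euc d)) (t : unitInterval) : ℝ≥0∞ :=
  eVariationOn β (Set.Icc 0 t)

/-- The normalized arc-length function `s_β(t) = L(β|_{[0,t]})/L(β)`. -/
def sFrac {d : ℕ} (β : C(unitInterval, Euc d)) (t : unitInterval) : ℝ≥0∞ :=
  lengthTo β t / curveLength β

/-- The generalized inverse `q_β(u) = inf {t : s_β(t) ≥ u}` (computed in `ℝ`). -/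
def qInf {d : ℕ} (β : C(unitInterval, Euc d)) (u : ℝ) : ℝ :=
  sInf {x : ℝ | ∃ t : unitInterval, (t : ℝ) = x ∧ ENNReal.ofReal u ≤ sFrac β t}

/-- `q_β(u)` as a point of `[0,1]`. -/
def qPoint {d : ℕ} (β : C(unitInterval, Euc d)) (u : ℝ) : unitInterval :=
  Set.projIcc 0 1 zero_le_one (qInf β u)

/-! ### Auxiliary lemmas -/

lemma lsc_eVariationOn {d : ℕ} (s : Set unitInterval) :
    LowerSemicontinuous (fun β : C(unitInterval, Euc d) => eVariationOn (⇑β) s) := by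
  have h : (fun β : C(unitInterval, Euc d) => eVariationOn (⇑β) s) =
      fun β => ⨆ p : ℕ × { u : ℕ → unitInterval // Monotone u ∧ ∀ i, u i ∈ s },
        ∑ i ∈ Finset.range p.1, edist (β (p.2.1 (i + 1))) (β (p.2.1 i)) := rfl
  rw [h]
  refine lowerSemicontinuous_iSup fun p => Continuous.lowerSemicontinuous ?_
  exact continuous_finset_sum _ fun i _ =>
    Continuous.edist (continuous_eval_const _) (continuous_eval_const _)

lemma sFrac_mono {d : ℕ} (β : C(unitInterval, Euc d)) : Monotone (sFrac β) := fun s t h =>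
  ENNReal.div_le_div_right (eVariationOn.mono _ (Set.Icc_subset_Icc le_rfl h)) _

lemma Icc_zero_one_unitInterval : Set.Icc (0 : unitInterval) 1 = Set.univ := by
  ext x
  simp only [Set.mem_Icc, Set.mem_univ, iff_true]
  exact ⟨unitInterval.nonneg', unitInterval.le_one'⟩

lemma sFrac_one {d : ℕ} (β : C(unitInterval, Euc d)) (h0 : 0 < curveLength β)
    (ht : curveLength β < ⊤) : sFrac β 1 = 1 := by
  unfold sFrac lengthTo curveLength
  rw [Icc_zero_one_unitInterval]
  exact ENNReal.div_self h0.ne' ht.ne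

lemma sFrac_le_one {d : ℕ} (β : C(unitInterval, Euc d)) (h0 : 0 < curveLength β)
    (ht : curveLength β < ⊤) (t : unitInterval) : sFrac β t ≤ 1 := by
  rw [← sFrac_one β h0 ht]
  exact sFrac_mono β unitInterval.le_one'

lemma qInf_nonneg {d : ℕ} (β : C(unitInterval, Euc d)) (u : ℝ) : 0 ≤ qInf β u :=
  Real.sInf_nonneg fun x hx => by
    obtain ⟨t, rfl, -⟩ := hx
    exact t.2.1

/-- Rationals in `[0,1]`, a countable index type. -/
abbrev Q01 : Type := { q : ℚ // (q : ℝ) ∈ Set.Icc (0 : ℝ) 1 }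

lemma qInf_lt_iff {d : ℕ} (β : C(unitInterval, Euc d)) (h0 : 0 < curveLength β)
    (ht : curveLength β < ⊤) {a : ℝ} (ha : 0 < a) (u : ℝ) :
    qInf β u < a ↔ 1 < u ∨
      ∃ r : Q01, ((r : ℚ) : ℝ) < a ∧ ENNReal.ofReal u ≤ sFrac β ⟨(r : ℚ), r.2⟩ := by
  set S : Set ℝ := {x : ℝ | ∃ t : unitInterval, (t : ℝ) = x ∧ ENNReal.ofReal u ≤ sFrac β t}
    with hS
  have hbdd : BddBelow S := ⟨0, fun x hx => by obtain ⟨t, rfl, -⟩ := hx; exact t.2.1⟩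
  constructor
  · intro hlt
    by_cases hu : 1 < u
    · exact Or.inl hu
    · right
      have hu' : ENNReal.ofReal u ≤ 1 := ENNReal.ofReal_le_one.2 (not_lt.1 hu)
      have h1S : (1 : ℝ) ∈ S := ⟨1, rfl, by rw [sFrac_one β h0 ht]; exact hu'⟩
      obtain ⟨x, hxS, hxa⟩ := (csInf_lt_iff hbdd ⟨1, h1S⟩).1 hlt
      obtain ⟨t, rfl, hts⟩ := hxS
      by_cases hcase : (t : ℝ) < min a 1
      · obtain ⟨r, hr1, hr2⟩ := exists_rat_btwn hcase
        have hr0 : (0 : ℝ) ≤ (r : ℝ) := le_of_lt (lt_of_le_of_lt t.2.1 hr1)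
        have hrI : ((r : ℚ) : ℝ) ∈ Set.Icc (0 : ℝ) 1 :=
          ⟨hr0, le_of_lt (hr2.trans_le (min_le_right _ _))⟩
        refine ⟨⟨r, hrI⟩, hr2.trans_le (min_le_left _ _), ?_⟩
        refine le_trans hts (sFrac_mono β ?_)
        exact Subtype.mk_le_mk.2 hr1.le
      · push_neg at hcase
        have h1a : 1 < a := by
          rcases le_or_gt a 1 with h | h
          · rw [min_eq_left h] at hcase
            exact absurd hxa (not_lt.2 hcase)
          · exact h
        rw [min_eq_right h1a.le] at hcase
        have htv : (t : ℝ) = 1 := le_antisymm t.2.2 hcase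
        have hrI : ((1 : ℚ) : ℝ) ∈ Set.Icc (0 : ℝ) 1 := by norm_num
        refine ⟨⟨1, hrI⟩, by simpa using h1a, ?_⟩
        have heq : (⟨((1 : ℚ) : ℝ), hrI⟩ : unitInterval) = t := by
          apply Subtype.ext; rw [htv]; norm_num
        rw [heq]; exact hts
  · rintro (hu | ⟨r, hra, hru⟩)
    · have hSe : S = ∅ := by
        ext x
        simp only [hS, Set.mem_setOf_eq, Set.mem_empty_iff_false, iff_false, not_exists]
        rintro t ⟨-, h⟩
        exact absurd (h.trans (sFrac_le_one β h0 ht t))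
          (not_le.2 (ENNReal.one_lt_ofReal.2 hu))
      unfold qInf
      rw [← hS, hSe, Real.sInf_empty]
      exact ha
    · exact lt_of_le_of_lt (csInf_le hbdd ⟨⟨(r : ℚ), r.2⟩, rfl, hru⟩) hra

/-- Part 3 of Lemma S2.3 of the paper: for a non-negative bounded Borel function
`f : ℝ^d → ℝ`, the line integral `β ↦ ∫₀¹ f(β(q_β(t))) dt` of `f` with respect to the
arc-length probability measure of `β` is Borel measurable on the set of rectifiable
paths of positive length. -/
theorem lineIntegral_measurable (d : ℕ) (hd : 1 ≤ d)
    (f : Euc d → ℝ) (hf : Measurable f) (hf0 : ∀ y, 0 ≤ f y) (hfb : ∃ C, ∀ y, f y ≤ C) :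
    @Measurable {β : C(unitInterval, Euc d) // 0 < curveLength β ∧ curveLength β < ⊤} ℝ
      (@Subtype.instMeasurableSpace _ _ (borel C(unitInterval, Euc d))) _
      (fun β => ∫ t in Set.Icc (0:ℝ) 1, f (β.1 (qPoint β.1 t))) := by
  letI : MeasurableSpace C(unitInterval, Euc d) := borel _
  haveI : BorelSpace C(unitInterval, Euc d) := ⟨rfl⟩
  set T := {β : C(unitInterval, Euc d) // 0 < curveLength β ∧ curveLength β < ⊤}
  -- measurability of β ↦ sFrac β t for fixed t
  have hsF : ∀ t : unitInterval, Measurable fun β : T => sFrac β.1 t := by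
    intro t
    have h1 : Measurable fun β : C(unitInterval, Euc d) => lengthTo β t :=
      (lsc_eVariationOn (Set.Icc 0 t)).measurable
    have h2 : Measurable fun β : C(unitInterval, Euc d) => curveLength β :=
      (lsc_eVariationOn Set.univ).measurable
    exact (h1.comp measurable_subtype_coe).div (h2.comp measurable_subtype_coe)
  -- joint measurability of qInf
  have hq : Measurable fun p : T × ℝ => qInf p.1.1 p.2 := by
    apply measurable_of_Iio
    intro a
    rcases le_or_gt a 0 with ha | ha
    · have he : (fun p : T × ℝ => qInf p.1.1 p.2) ⁻¹' Set.Iio a = ∅ := by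
        ext p
        simp only [Set.mem_preimage, Set.mem_Iio, Set.mem_empty_iff_false, iff_false, not_lt]
        exact ha.trans (qInf_nonneg _ _)
      rw [he]; exact MeasurableSet.empty
    · have he : (fun p : T × ℝ => qInf p.1.1 p.2) ⁻¹' Set.Iio a =
        {p : T × ℝ | 1 < p.2} ∪ ⋃ r : Q01,
          {p : T × ℝ | ((r : ℚ) : ℝ) < a ∧ ENNReal.ofReal p.2 ≤ sFrac p.1.1 ⟨(r : ℚ), r.2⟩} := by
        ext p
        simp only [Set.mem_preimage, Set.mem_Iio, Set.mem_union, Set.mem_iUnion,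
          Set.mem_setOf_eq]
        exact qInf_lt_iff p.1.1 p.1.2.1 p.1.2.2 ha p.2
      rw [he]
      refine MeasurableSet.union (measurable_snd measurableSet_Ioi) ?_
      refine MeasurableSet.iUnion fun r => ?_
      have heq : {p : T × ℝ | ((r : ℚ) : ℝ) < a ∧
          ENNReal.ofReal p.2 ≤ sFrac p.1.1 ⟨(r : ℚ), r.2⟩} =
          {p : T × ℝ | ((r : ℚ) : ℝ) < a} ∩
          {p : T × ℝ | ENNReal.ofReal p.2 ≤ sFrac p.1.1 ⟨(r : ℚ), r.2⟩} := rfl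
      rw [heq]
      exact (MeasurableSet.const _).inter
        (measurableSet_le (ENNReal.measurable_ofReal.comp measurable_snd)
          ((hsF _).comp measurable_fst))
  -- joint measurability of qPoint
  have hqP : Measurable fun p : T × ℝ => qPoint p.1.1 p.2 :=
    continuous_projIcc.measurable.comp hq
  -- joint measurability of the evaluation
  have heval : Measurable fun p : T × ℝ => p.1.1 (qPoint p.1.1 p.2) := by
    have hc : Continuous fun q : C(unitInterval, Euc d) × unitInterval => q.1 q.2 :=
      continuous_eval
    exact hc.measurable.comp ((measurable_subtype_coe.comp measurable_fst).prodMk hqP)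
  have h : Measurable fun p : T × ℝ => f (p.1.1 (qPoint p.1.1 p.2)) := hf.comp heval
  have hsm : StronglyMeasurable fun p : T × ℝ => f (p.1.1 (qPoint p.1.1 p.2)) :=
    h.stronglyMeasurable
  exact (hsm.integral_prod_right' (ν := volume.restrict (Set.Icc (0:ℝ) 1))).measurable
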